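/- arXiv:1708.08415 — 4 statements merged into one kernel-verified Lean document; each statement's English description precedes it below -/
import Mathlib

section
/- Let 0 < R0 < R1 with R1 > e^{1/4} R0. Then there exists an admissible transition function χ for (R0, R1), i.e. a three times continuously differentiable function χ on [0, ∞) with χ(r) = 0 for 0 ≤ r ≤ R0, χ(r) = 1 for r ≥ R1, 0 < χ(r) < 1 for R0 < r < R1, and 0 ≤ r·χ′(r) < 4 for all r > 0. -/
/-!
Work in the logarithmic variable `t = log (r / R0)`, in which `(R0, R1)` becomes `(0, L)` with
`L = log (R1 / R0) > 1/4`, and `r χ'(r)` becomes the derivative of the profile in `t`. For the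
profile take the cumulative distribution function of a normalized bump supported on `[0, L]`
that equals its maximum on a plateau of length `ℓ > 1/4`: its derivative is the density, which
is at most `1 / ℓ < 4`.
-/

open Real Set MeasureTheory
open scoped ContDiff

/-- `χ : ℝ → ℝ` is an *admissible transition function* for `(R0, R1)`:
`χ` is three times continuously differentiable on `[0, ∞)` and satisfies
(i) `χ(r) = 0` for `0 ≤ r ≤ R0`, `χ(r) = 1` for `r ≥ R1`, `0 < χ(r) < 1` for `R0 < r < R1`;
(ii) `0 ≤ r·χ′(r) < 4` for all `r > 0`. -/
structure IsAdmissibleTransition (R0 R1 : ℝ) (χ : ℝ → ℝ) : Prop where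
  contDiffOn : ContDiffOn ℝ 3 χ (Set.Ici 0)
  eq_zero : ∀ r, 0 ≤ r → r ≤ R0 → χ r = 0
  eq_one : ∀ r, R1 ≤ r → χ r = 1
  mem_Ioo : ∀ r, R0 < r → r < R1 → χ r ∈ Set.Ioo (0 : ℝ) 1
  deriv_nonneg : ∀ r : ℝ, 0 < r → 0 ≤ r * deriv χ r
  deriv_lt_four : ∀ r : ℝ, 0 < r → r * deriv χ r < 4

namespace ContDiffBump

variable {c : ℝ} (f : ContDiffBump c)

noncomputable def cdf (t : ℝ) : ℝ := ∫ u in (c - f.rOut)..t, f.normed volume u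

theorem normed_volume_le (x : ℝ) : f.normed volume x ≤ (2 * f.rIn)⁻¹ := by
  simpa [volume_real_closedBall f.rIn_pos.le] using f.normed_le_div_measure_closedBall_rIn volume x

theorem hasDerivAt_cdf (t : ℝ) : HasDerivAt f.cdf (f.normed volume t) t :=
  (f.continuous_normed.integral_hasStrictDerivAt _ t).hasDerivAt

theorem deriv_cdf : deriv f.cdf = f.normed volume :=
  funext fun t => (f.hasDerivAt_cdf t).deriv

theorem contDiff_cdf : ContDiff ℝ ∞ f.cdf :=
  contDiff_infty_iff_deriv.2
    ⟨fun t => (f.hasDerivAt_cdf t).differentiableAt, f.deriv_cdf ▸ f.contDiff_normed⟩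

theorem cdf_eq_zero {t : ℝ} (ht : t ≤ c - f.rOut) : f.cdf t = 0 := by
  rw [cdf, intervalIntegral.integral_symm, neg_eq_zero]
  refine intervalIntegral.integral_zero_ae (Filter.Eventually.of_forall fun u hu => ?_)
  rw [uIoc_of_le ht] at hu
  refine Function.notMem_support.1 fun hu' => ?_
  rw [f.support_normed_eq, Real.ball_eq_Ioo] at hu'
  linarith [hu.2, hu'.1]

theorem cdf_eq_one {t : ℝ} (ht : c + f.rOut ≤ t) : f.cdf t = 1 := by
  rw [cdf, intervalIntegral.integral_eq_integral_of_support_subset, f.integral_normed]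
  rw [f.support_normed_eq, Real.ball_eq_Ioo]
  exact Ioo_subset_Ioc_self.trans (Ioc_subset_Ioc_right ht)

theorem cdf_mem_Ioo {t : ℝ} (ht₀ : c - f.rOut < t) (ht₁ : t < c + f.rOut) :
    f.cdf t ∈ Ioo 0 1 := by
  have hpos : ∀ u ∈ Ioo (c - f.rOut) (c + f.rOut), 0 < f.normed volume u := fun u hu =>
    (f.nonneg_normed u).lt_of_ne' (by rwa [← Function.mem_support, f.support_normed_eq,
      Real.ball_eq_Ioo])
  have hint : ∀ a b, IntervalIntegrable (f.normed volume) volume a b := fun a b =>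
    f.continuous_normed.intervalIntegrable a b
  have hsplit : f.cdf t + ∫ u in t..(c + f.rOut), f.normed volume u = 1 := by
    rw [cdf, intervalIntegral.integral_add_adjacent_intervals (hint _ _) (hint _ _)]
    exact f.cdf_eq_one le_rfl
  have hrest : 0 < ∫ u in t..(c + f.rOut), f.normed volume u :=
    intervalIntegral.intervalIntegral_pos_of_pos_on (hint _ _)
      (fun u hu => hpos u ⟨ht₀.trans hu.1, hu.2⟩) ht₁
  exact ⟨intervalIntegral.intervalIntegral_pos_of_pos_on (hint _ _)
      (fun u hu => hpos u ⟨hu.1, hu.2.trans ht₁⟩) ht₀, by linarith⟩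

end ContDiffBump

theorem hasDerivAt_log_div {a x : ℝ} (ha : a ≠ 0) (hx : x ≠ 0) :
    HasDerivAt (fun y => log (y / a)) x⁻¹ x := by
  convert ((hasDerivAt_id' x).div_const a).log (div_ne_zero hx ha) using 1
  field_simp

theorem isAdmissibleTransition_comp_log {R0 R1 : ℝ} (hR0 : 0 < R0) (hR01 : R0 < R1) {G : ℝ → ℝ}
    (hG : ContDiff ℝ 3 G) (hG₀ : ∀ t ≤ 0, G t = 0) (hG₁ : ∀ t, log (R1 / R0) ≤ t → G t = 1)
    (hG_mem : ∀ t, 0 < t → t < log (R1 / R0) → G t ∈ Ioo 0 1)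
    (hG'_nonneg : ∀ t, 0 ≤ deriv G t) (hG'_lt : ∀ t, deriv G t < 4) :
    IsAdmissibleTransition R0 R1 (fun r => G (log (r / R0))) := by
  have eq_zero : ∀ r, 0 ≤ r → r ≤ R0 → G (log (r / R0)) = 0 := fun r hr₀ hr₁ =>
    hG₀ _ (log_nonpos (by positivity) ((div_le_one hR0).2 hr₁))
  have r_mul_deriv : ∀ r, 0 < r → r * deriv (fun r => G (log (r / R0))) r =
      deriv G (log (r / R0)) := fun r hr => by
    have hχ : HasDerivAt (fun r => G (log (r / R0))) (deriv G (log (r / R0)) * r⁻¹) r :=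
      (hG.differentiable (by norm_num) _).hasDerivAt.comp r (hasDerivAt_log_div hR0.ne' hr.ne')
    rw [hχ.deriv]
    field_simp
  refine ⟨fun x hx => ?_, eq_zero, fun r hr => hG₁ _ ?_, fun r hr₀ hr₁ => hG_mem _ ?_ ?_,
    fun r hr => r_mul_deriv r hr ▸ hG'_nonneg _, fun r hr => r_mul_deriv r hr ▸ hG'_lt _⟩
  · rcases (mem_Ici.1 hx).eq_or_lt with rfl | hx
    · refine (contDiffWithinAt_const (c := (0 : ℝ))).congr_of_eventuallyEq ?_
        (eq_zero 0 le_rfl hR0.le)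
      filter_upwards [nhdsWithin_le_nhds (Iio_mem_nhds hR0), self_mem_nhdsWithin] with y hy₁ hy₀
      exact eq_zero y hy₀ (le_of_lt hy₁)
    · exact (hG.contDiffAt.comp x ((contDiffAt_log.2 (by positivity)).comp x
        (contDiffAt_id.div_const R0))).contDiffWithinAt
  · exact log_le_log (div_pos (hR0.trans hR01) hR0) (by gcongr)
  · exact log_pos ((one_lt_div hR0).2 hr₀)
  · exact log_lt_log (div_pos (hR0.trans hr₀) hR0) (by gcongr)

/-- If `0 < R0 < R1` with `R1 > e^{1/4} R0`, then there exists an admissible transition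
function for `(R0, R1)`. -/
theorem exists_admissible_transition (R0 R1 : ℝ) (hR0 : 0 < R0) (hR01 : R0 < R1)
    (h : R1 > Real.exp (1 / 4) * R0) :
    ∃ χ : ℝ → ℝ, IsAdmissibleTransition R0 R1 χ := by
  set L := log (R1 / R0)
  have hL : 1 / 4 < L :=
    (lt_log_iff_exp_lt (div_pos (hR0.trans hR01) hR0)).2 ((lt_div_iff₀ hR0).2 h)
  let f : ContDiffBump (L / 2) := ⟨(L / 2 + 1 / 8) / 2, L / 2, by linarith, by linarith⟩
  have hplateau : 1 / 4 < 2 * f.rIn := by change 1 / 4 < 2 * ((L / 2 + 1 / 8) / 2); linarith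
  have hleft : L / 2 - f.rOut = 0 := sub_self _
  have hright : L / 2 + f.rOut = L := add_halves L
  refine ⟨_, isAdmissibleTransition_comp_log (G := f.cdf) hR0 hR01
    (f.contDiff_cdf.of_le (by norm_cast))
    (fun t ht => f.cdf_eq_zero (by rwa [hleft])) (fun t ht => f.cdf_eq_one (by rwa [hright]))
    (fun t ht₀ ht₁ => f.cdf_mem_Ioo (by rwa [hleft]) (by rwa [hright]))
    (fun t => f.deriv_cdf ▸ f.nonneg_normed t) (fun t => ?_)⟩
  rw [f.deriv_cdf]
  calc f.normed volume t ≤ (2 * f.rIn)⁻¹ := f.normed_volume_le t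
    _ < 4 := by rw [inv_lt_comm₀ (by linarith) (by norm_num)]; linarith
end

section
/- Morawetz–Ludwig identity: let d ≥ 2 be an integer, D ⊆ ℝ^d \ {0} open, k ∈ ℝ and α ∈ ℝ, and let v : D → ℂ be twice continuously differentiable. For x ∈ D set r := |x|, v_r := x·∇v/r, Lv := Δv + k²v and M_α v := r( v_r − i k v + (α/r) v ) = x·∇v − i k r v + α v. Then at every point of D, 2 Re( conj(M_α v) Lv ) = div[ 2 Re( conj(M_α v) ∇v ) + (k²|v|² − |∇v|²) x ] + (2α − (d−1))(k²|v|² − |∇v|²) − (|∇v|² − |v_r|²) − |v_r − i k v|². -/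
open scoped BigOperators ComplexConjugate

noncomputable section

/-- Partial derivative of a complex-valued function in the `i`-th coordinate direction. -/
def cpd (d : ℕ) (f : EuclideanSpace ℝ (Fin d) → ℂ) (i : Fin d)
    (x : EuclideanSpace ℝ (Fin d)) : ℂ :=
  fderiv ℝ f x (EuclideanSpace.single i 1)

/-- Divergence of a vector field on `ℝ^d`. -/
def vdiv (d : ℕ) (Z : EuclideanSpace ℝ (Fin d) → EuclideanSpace ℝ (Fin d))
    (x : EuclideanSpace ℝ (Fin d)) : ℝ :=
  ∑ i, fderiv ℝ Z x (EuclideanSpace.single i 1) i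

/-- Laplacian (sum of second partial derivatives) of a complex-valued function. -/
def clap (d : ℕ) (f : EuclideanSpace ℝ (Fin d) → ℂ) (x : EuclideanSpace ℝ (Fin d)) : ℂ :=
  ∑ i, cpd d (cpd d f i) i x

/-- `|∇f|² = Σ_j |∂_j f|²`. -/
def gradsq (d : ℕ) (f : EuclideanSpace ℝ (Fin d) → ℂ) (x : EuclideanSpace ℝ (Fin d)) : ℝ :=
  ∑ i, ‖cpd d f i x‖ ^ 2

/-- Radial derivative `v_r = x·∇v/r`, `r = |x|`. -/
def rder (d : ℕ) (f : EuclideanSpace ℝ (Fin d) → ℂ) (x : EuclideanSpace ℝ (Fin d)) : ℂ :=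
  (∑ i, ((x i : ℝ) : ℂ) * cpd d f i x) / ((‖x‖ : ℝ) : ℂ)

/-!
Write `M = M_α v`, `L = k²|v|² − |∇v|²` and `Hᵢ = 2 conj(M) ∂ᵢv + L xᵢ`, so that the flux is
`Re H`. By the product rule `∑ᵢ ∂ᵢHᵢ = 2 conj(M) Δv + 2 ∑ᵢ ∂ᵢv conj(∂ᵢM) + d L + x·∇L`.
Symmetry of the Hessian gives `∂ᵢ(x·∇v) = ∂ᵢv + x·∇(∂ᵢv)`, so the second-order terms
`2 Re ∑ᵢ conj(∂ᵢv) x·∇(∂ᵢv)` enter through `∇M` and through `x·∇|∇v|²` with opposite signs.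
What is left is an algebraic identity between `v`, `x·∇v`, `Δv` and `|∇v|²` at the point.
-/

local notation "ℝ^" n => EuclideanSpace ℝ (Fin n)

theorem hasFDerivAt_norm {F : Type*} [NormedAddCommGroup F] [InnerProductSpace ℝ F] {x : F}
    (hx : x ≠ 0) : HasFDerivAt (‖·‖) (‖x‖⁻¹ • innerSL ℝ x) x := by
  have h := (hasStrictFDerivAt_norm_sq x).hasFDerivAt.sqrt (by positivity)
  simp only [Real.sqrt_sq (norm_nonneg _)] at h
  convert h using 1
  ext y
  simp only [smul_apply, coe_innerSL_apply, smul_eq_mul, nsmul_eq_mul, Nat.cast_ofNat]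
  field_simp

theorem HasFDerivAt.ofReal_comp {E : Type*} [NormedAddCommGroup E] [NormedSpace ℝ E]
    {u : E → ℝ} {u' : E →L[ℝ] ℝ} {x : E} (hu : HasFDerivAt u u' x) :
    HasFDerivAt (fun y => (u y : ℂ)) (Complex.ofRealCLM ∘L u') x :=
  Complex.ofRealCLM.hasFDerivAt.comp x hu

section PartialDeriv

variable {d : ℕ} {f g : (ℝ^d) → ℂ} {x : ℝ^d} {i : Fin d}

theorem cpd_add (hf : DifferentiableAt ℝ f x) (hg : DifferentiableAt ℝ g x) :
    cpd d (fun y => f y + g y) i x = cpd d f i x + cpd d g i x := by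
  simp [cpd, fderiv_fun_add hf hg]

theorem cpd_sub (hf : DifferentiableAt ℝ f x) (hg : DifferentiableAt ℝ g x) :
    cpd d (fun y => f y - g y) i x = cpd d f i x - cpd d g i x := by
  simp [cpd, fderiv_fun_sub hf hg]

theorem cpd_mul (hf : DifferentiableAt ℝ f x) (hg : DifferentiableAt ℝ g x) :
    cpd d (fun y => f y * g y) i x = f x * cpd d g i x + g x * cpd d f i x := by
  simp [cpd, fderiv_fun_mul hf hg]

theorem cpd_const_mul (hf : DifferentiableAt ℝ f x) (c : ℂ) :
    cpd d (fun y => c * f y) i x = c * cpd d f i x := by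
  simp [cpd, fderiv_const_mul hf c]

theorem cpd_sum {ι : Type*} {s : Finset ι} {F : ι → (ℝ^d) → ℂ}
    (hF : ∀ j ∈ s, DifferentiableAt ℝ (F j) x) :
    cpd d (fun y => ∑ j ∈ s, F j y) i x = ∑ j ∈ s, cpd d (F j) i x := by
  simp [cpd, fderiv_fun_sum hF]

theorem DifferentiableAt.conj (hf : DifferentiableAt ℝ f x) :
    DifferentiableAt ℝ (fun y => conj (f y)) x :=
  hf.star

theorem cpd_conj : cpd d (fun y => conj (f y)) i x = conj (cpd d f i x) := by
  change fderiv ℝ (fun y => star (f y)) x _ = star _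
  rw [fderiv_star]
  rfl

theorem differentiableAt_ofReal_coord (j : Fin d) :
    DifferentiableAt ℝ (fun y : ℝ^d => (y j : ℂ)) x := by
  fun_prop

theorem cpd_coord (j : Fin d) : cpd d (fun y => (y j : ℂ)) i x = if j = i then 1 else 0 := by
  have h : HasFDerivAt (fun y : ℝ^d => y j) (EuclideanSpace.proj j : (ℝ^d) →L[ℝ] ℝ) x :=
    (EuclideanSpace.proj j : (ℝ^d) →L[ℝ] ℝ).hasFDerivAt
  rw [cpd, h.ofReal_comp.fderiv]
  split_ifs <;> simp_all

theorem differentiableAt_ofReal_norm (hx : x ≠ 0) :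
    DifferentiableAt ℝ (fun y : ℝ^d => (‖y‖ : ℂ)) x :=
  (hasFDerivAt_norm hx).ofReal_comp.differentiableAt

theorem cpd_norm (hx : x ≠ 0) : cpd d (fun y => (‖y‖ : ℂ)) i x = (x i / ‖x‖ : ℝ) := by
  rw [cpd, (hasFDerivAt_norm hx).ofReal_comp.fderiv]
  simp [EuclideanSpace.inner_single_right, div_eq_inv_mul]

end PartialDeriv

section SecondDeriv

variable {d : ℕ} {v : (ℝ^d) → ℂ} {x : ℝ^d}

theorem ContDiffAt.differentiableAt_fderiv (hv : ContDiffAt ℝ 2 v x) :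
    DifferentiableAt ℝ (fderiv ℝ v) x :=
  (hv.fderiv_right (m := 1) le_rfl).differentiableAt one_ne_zero

theorem ContDiffAt.differentiableAt_cpd (hv : ContDiffAt ℝ 2 v x) (j : Fin d) :
    DifferentiableAt ℝ (cpd d v j) x :=
  hv.differentiableAt_fderiv.clm_apply (differentiableAt_const _)

theorem cpd_cpd_comm (hv : ContDiffAt ℝ 2 v x) (i j : Fin d) :
    cpd d (cpd d v j) i x = cpd d (cpd d v i) j x := by
  have hessian (a b : Fin d) : cpd d (cpd d v b) a x
      = fderiv ℝ (fderiv ℝ v) x (EuclideanSpace.single a 1) (EuclideanSpace.single b 1) := by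
    change fderiv ℝ (fun y => fderiv ℝ v y (EuclideanSpace.single b 1)) x _ = _
    rw [fderiv_clm_apply hv.differentiableAt_fderiv (differentiableAt_const _)]
    simp
  rw [hessian, hessian]
  exact hv.isSymmSndFDerivAt (by simp) _ _

end SecondDeriv

def eulerDeriv (d : ℕ) (f : (ℝ^d) → ℂ) (x : ℝ^d) : ℂ :=
  ∑ j, (x j : ℂ) * cpd d f j x

section EulerDeriv

variable {d : ℕ} {v : (ℝ^d) → ℂ} {x : ℝ^d}

theorem ContDiffAt.differentiableAt_eulerDeriv (hv : ContDiffAt ℝ 2 v x) :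
    DifferentiableAt ℝ (eulerDeriv d v) x :=
  DifferentiableAt.fun_sum fun j _ =>
    (differentiableAt_ofReal_coord j).mul (hv.differentiableAt_cpd j)

theorem cpd_eulerDeriv (hv : ContDiffAt ℝ 2 v x) (i : Fin d) :
    cpd d (eulerDeriv d v) i x = cpd d v i x + eulerDeriv d (cpd d v i) x := by
  unfold eulerDeriv
  rw [cpd_sum fun j _ => (differentiableAt_ofReal_coord j).fun_mul (hv.differentiableAt_cpd j)]
  simp only [cpd_mul (differentiableAt_ofReal_coord _) (hv.differentiableAt_cpd _), cpd_coord,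
    cpd_cpd_comm hv i, Finset.sum_add_distrib, mul_ite, mul_one, mul_zero, Finset.sum_ite_eq',
    Finset.mem_univ, if_true]
  ring

end EulerDeriv

section NormSq

variable {d : ℕ} {f : (ℝ^d) → ℂ} {x : ℝ^d} {i : Fin d}

theorem ofReal_normSq_eq_mul_conj :
    (fun y => ((‖f y‖ ^ 2 : ℝ) : ℂ)) = fun y => f y * conj (f y) := by
  funext y
  rw [Complex.mul_conj']
  push_cast
  rfl

theorem DifferentiableAt.ofReal_normSq (hf : DifferentiableAt ℝ f x) :
    DifferentiableAt ℝ (fun y => ((‖f y‖ ^ 2 : ℝ) : ℂ)) x := by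
  rw [ofReal_normSq_eq_mul_conj]
  exact hf.mul hf.conj

theorem cpd_ofReal_normSq (hf : DifferentiableAt ℝ f x) :
    cpd d (fun y => ((‖f y‖ ^ 2 : ℝ) : ℂ)) i x = 2 * (conj (f x) * cpd d f i x).re := by
  rw [ofReal_normSq_eq_mul_conj, cpd_mul hf hf.conj, cpd_conj, Complex.re_eq_add_conj]
  simp only [map_mul, Complex.conj_conj]
  ring

end NormSq

section Divergence

variable {d : ℕ} {x : ℝ^d}

theorem vdiv_toLp_re {H : Fin d → (ℝ^d) → ℂ} (hH : ∀ i, DifferentiableAt ℝ (H i) x) :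
    vdiv d (fun y => WithLp.toLp 2 fun i => (H i y).re) x = (∑ i, cpd d (H i) i x).re := by
  have hre (i : Fin d) :
      HasFDerivAt (fun y => (H i y).re) (Complex.reCLM ∘L fderiv ℝ (H i) x) x :=
    Complex.reCLM.hasFDerivAt.comp x (hH i).hasFDerivAt
  have hZ : HasFDerivAt (fun y => WithLp.toLp 2 fun i => (H i y).re) _ x :=
    (PiLp.hasFDerivAt_toLp 2 _).comp x (hasFDerivAt_pi.2 hre)
  rw [vdiv, hZ.fderiv, Complex.re_sum]
  simp [cpd]

theorem sum_cpd_flux {v M c : (ℝ^d) → ℂ} (hv : ∀ i, DifferentiableAt ℝ (cpd d v i) x)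
    (hM : DifferentiableAt ℝ M x) (hc : DifferentiableAt ℝ c x) :
    ∑ i, cpd d (fun y => 2 * (conj (M y) * cpd d v i y) + c y * (y i : ℂ)) i x
      = 2 * conj (M x) * clap d v x + 2 * ∑ i, cpd d v i x * conj (cpd d M i x)
        + d * c x + eulerDeriv d c x := by
  have hterm (i : Fin d) :
      cpd d (fun y => 2 * (conj (M y) * cpd d v i y) + c y * (y i : ℂ)) i x
        = 2 * conj (M x) * cpd d (cpd d v i) i x + 2 * (cpd d v i x * conj (cpd d M i x))
          + c x + (x i : ℂ) * cpd d c i x := by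
    rw [cpd_add ((hM.conj.fun_mul (hv i)).const_mul 2)
        (hc.fun_mul (differentiableAt_ofReal_coord i)),
      cpd_const_mul (hM.conj.fun_mul (hv i)), cpd_mul hM.conj (hv i), cpd_conj,
      cpd_mul hc (differentiableAt_ofReal_coord i), cpd_coord, if_pos rfl]
    ring
  simp only [hterm, Finset.sum_add_distrib, ← Finset.mul_sum, Finset.sum_const, Finset.card_univ,
    Fintype.card_fin, nsmul_eq_mul]
  rfl

end Divergence

def morawetzMultiplier (d : ℕ) (k α : ℝ) (v : (ℝ^d) → ℂ) (y : ℝ^d) : ℂ :=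
  eulerDeriv d v y - Complex.I * k * ‖y‖ * v y + α * v y

section Multiplier

variable {d : ℕ} {k α : ℝ} {v : (ℝ^d) → ℂ} {x : ℝ^d}

theorem ContDiffAt.differentiableAt_morawetzMultiplier (hv : ContDiffAt ℝ 2 v x) (hx : x ≠ 0) :
    DifferentiableAt ℝ (morawetzMultiplier d k α v) x :=
  (hv.differentiableAt_eulerDeriv.sub
    (((differentiableAt_ofReal_norm hx).const_mul _).mul (hv.differentiableAt two_ne_zero))).add
    ((hv.differentiableAt two_ne_zero).const_mul _)

theorem cpd_morawetzMultiplier (hv : ContDiffAt ℝ 2 v x) (hx : x ≠ 0) (i : Fin d) :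
    cpd d (morawetzMultiplier d k α v) i x
      = (1 + α - Complex.I * k * ‖x‖) * cpd d v i x + eulerDeriv d (cpd d v i) x
        - Complex.I * k * (x i / ‖x‖ : ℝ) * v x := by
  have hv1 := hv.differentiableAt two_ne_zero
  have hr := (differentiableAt_ofReal_norm hx).const_mul (Complex.I * k)
  unfold morawetzMultiplier
  rw [cpd_add (hv.differentiableAt_eulerDeriv.fun_sub (hr.fun_mul hv1)) (hv1.const_mul _),
    cpd_sub hv.differentiableAt_eulerDeriv (hr.fun_mul hv1), cpd_eulerDeriv hv,
    cpd_mul hr hv1, cpd_const_mul (differentiableAt_ofReal_norm hx), cpd_norm hx,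
    cpd_const_mul hv1]
  ring

theorem re_cpd_mul_conj_cpd_morawetzMultiplier (hv : ContDiffAt ℝ 2 v x) (hx : x ≠ 0)
    (i : Fin d) :
    (cpd d v i x * conj (cpd d (morawetzMultiplier d k α v) i x)).re
      = (1 + α) * ‖cpd d v i x‖ ^ 2 + (conj (cpd d v i x) * eulerDeriv d (cpd d v i) x).re
        - k * x i * (conj (v x) * cpd d v i x).im / ‖x‖ := by
  rw [cpd_morawetzMultiplier hv hx, Complex.sq_norm, Complex.normSq_apply]
  simp only [map_sub, map_add, map_mul, map_one, Complex.conj_ofReal, Complex.conj_I,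
    Complex.mul_re, Complex.mul_im, Complex.sub_re, Complex.sub_im, Complex.add_re,
    Complex.add_im, Complex.conj_re, Complex.conj_im, Complex.I_re, Complex.I_im,
    Complex.ofReal_re, Complex.ofReal_im, Complex.one_re, Complex.one_im, Complex.neg_re,
    Complex.neg_im]
  ring

theorem re_sum_cpd_mul_conj_cpd_morawetzMultiplier (hv : ContDiffAt ℝ 2 v x) (hx : x ≠ 0) :
    (∑ i, cpd d v i x * conj (cpd d (morawetzMultiplier d k α v) i x)).re
      = (1 + α) * gradsq d v x + ∑ i, (conj (cpd d v i x) * eulerDeriv d (cpd d v i) x).re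
        - k * (conj (v x) * eulerDeriv d v x).im / ‖x‖ := by
  simp only [Complex.re_sum, re_cpd_mul_conj_cpd_morawetzMultiplier hv hx,
    Finset.sum_sub_distrib, Finset.sum_add_distrib, gradsq, Finset.mul_sum, eulerDeriv,
    Complex.im_sum, Finset.sum_div]
  congr 1
  refine Finset.sum_congr rfl fun i _ => ?_
  rw [mul_left_comm, Complex.im_ofReal_mul]
  ring

end Multiplier

def helmholtzLagrangian (d : ℕ) (k : ℝ) (v : (ℝ^d) → ℂ) (y : ℝ^d) : ℝ :=
  k ^ 2 * ‖v y‖ ^ 2 - gradsq d v y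

section Lagrangian

variable {d : ℕ} {k : ℝ} {v : (ℝ^d) → ℂ} {x : ℝ^d}

theorem ofReal_helmholtzLagrangian :
    (fun y => (helmholtzLagrangian d k v y : ℂ))
      = fun y => (k : ℂ) ^ 2 * ((‖v y‖ ^ 2 : ℝ) : ℂ) - ∑ j, ((‖cpd d v j y‖ ^ 2 : ℝ) : ℂ) := by
  funext y
  simp [helmholtzLagrangian, gradsq]

theorem ContDiffAt.differentiableAt_helmholtzLagrangian (hv : ContDiffAt ℝ 2 v x) :
    DifferentiableAt ℝ (fun y => (helmholtzLagrangian d k v y : ℂ)) x := by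
  rw [ofReal_helmholtzLagrangian]
  exact ((hv.differentiableAt two_ne_zero).ofReal_normSq.const_mul _).sub
    (DifferentiableAt.fun_sum fun j _ => (hv.differentiableAt_cpd j).ofReal_normSq)

theorem cpd_helmholtzLagrangian (hv : ContDiffAt ℝ 2 v x) (i : Fin d) :
    cpd d (fun y => (helmholtzLagrangian d k v y : ℂ)) i x
      = ((2 * k ^ 2 * (conj (v x) * cpd d v i x).re
          - 2 * ∑ j, (conj (cpd d v j x) * cpd d (cpd d v j) i x).re : ℝ) : ℂ) := by
  have hv1 := hv.differentiableAt two_ne_zero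
  rw [ofReal_helmholtzLagrangian,
    cpd_sub (hv1.ofReal_normSq.const_mul _)
      (DifferentiableAt.fun_sum fun j _ => (hv.differentiableAt_cpd j).ofReal_normSq),
    cpd_const_mul hv1.ofReal_normSq, cpd_ofReal_normSq hv1,
    cpd_sum fun j _ => (hv.differentiableAt_cpd j).ofReal_normSq]
  simp only [cpd_ofReal_normSq (hv.differentiableAt_cpd _)]
  push_cast
  rw [Finset.mul_sum]
  ring

theorem re_eulerDeriv_helmholtzLagrangian (hv : ContDiffAt ℝ 2 v x) :
    (eulerDeriv d (fun y => (helmholtzLagrangian d k v y : ℂ)) x).re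
      = 2 * k ^ 2 * (conj (v x) * eulerDeriv d v x).re
        - 2 * ∑ j, (conj (cpd d v j x) * eulerDeriv d (cpd d v j) x).re := by
  have hpull (a b : ℂ) (r : ℝ) : (a * (r * b)).re = r * (a * b).re := by
    rw [mul_left_comm, Complex.re_ofReal_mul]
  simp only [eulerDeriv, cpd_helmholtzLagrangian hv, ← Complex.ofReal_mul, Complex.re_sum,
    Complex.ofReal_re, Finset.mul_sum, hpull, mul_sub, Finset.sum_sub_distrib]
  rw [Finset.sum_comm (s := Finset.univ) (t := Finset.univ) (f := fun j i => 2 * _)]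
  congr 1 <;> refine Finset.sum_congr rfl fun _ _ => ?_
  · ring
  · exact Finset.sum_congr rfl fun _ _ => by ring

end Lagrangian

def morawetzFlux (d : ℕ) (k α : ℝ) (v : (ℝ^d) → ℂ) (y : ℝ^d) : ℝ^d :=
  WithLp.toLp 2 fun i =>
    2 * (conj (morawetzMultiplier d k α v y) * cpd d v i y).re + helmholtzLagrangian d k v y * y i

theorem vdiv_morawetzFlux {d : ℕ} {k α : ℝ} {v : (ℝ^d) → ℂ} {x : ℝ^d}
    (hv : ContDiffAt ℝ 2 v x) (hx : x ≠ 0) :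
    vdiv d (morawetzFlux d k α v) x
      = 2 * (conj (morawetzMultiplier d k α v x) * clap d v x).re + 2 * (1 + α) * gradsq d v x
        - 2 * k * (conj (v x) * eulerDeriv d v x).im / ‖x‖ + d * helmholtzLagrangian d k v x
        + 2 * k ^ 2 * (conj (v x) * eulerDeriv d v x).re := by
  have hM := hv.differentiableAt_morawetzMultiplier (k := k) (α := α) hx
  have hL := hv.differentiableAt_helmholtzLagrangian (k := k)
  have hflux : morawetzFlux d k α v = fun y => WithLp.toLp 2 fun i =>
      (2 * (conj (morawetzMultiplier d k α v y) * cpd d v i y)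
        + (helmholtzLagrangian d k v y : ℂ) * (y i : ℂ)).re := by
    funext y
    ext i
    simp [morawetzFlux]
  calc vdiv d (morawetzFlux d k α v) x
      = (∑ i, cpd d (fun y => 2 * (conj (morawetzMultiplier d k α v y) * cpd d v i y)
          + (helmholtzLagrangian d k v y : ℂ) * (y i : ℂ)) i x).re := by
        rw [hflux]
        exact vdiv_toLp_re fun i => ((hM.conj.mul (hv.differentiableAt_cpd i)).const_mul 2).add
          (hL.mul (differentiableAt_ofReal_coord i))
    _ = _ := by
        rw [sum_cpd_flux hv.differentiableAt_cpd hM hL]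
        simp only [Complex.add_re, Complex.mul_re, Complex.mul_im, Complex.re_ofNat,
          Complex.im_ofNat, Complex.natCast_re, Complex.natCast_im, Complex.ofReal_re,
          Complex.ofReal_im, re_eulerDeriv_helmholtzLagrangian hv,
          re_sum_cpd_mul_conj_cpd_morawetzMultiplier hv hx]
        ring

theorem morawetz_ludwig_identity_general (d : ℕ)
    (D : Set (EuclideanSpace ℝ (Fin d))) (hD : IsOpen D)
    (hD0 : D ⊆ {x : EuclideanSpace ℝ (Fin d) | x ≠ 0}) (k α : ℝ)
    (v : EuclideanSpace ℝ (Fin d) → ℂ) (hv : ContDiffOn ℝ 2 v D)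
    (x : EuclideanSpace ℝ (Fin d)) (hx : x ∈ D) :
    (fun (Lv Mv : EuclideanSpace ℝ (Fin d) → ℂ)
         (G : EuclideanSpace ℝ (Fin d) → EuclideanSpace ℝ (Fin d)) =>
      2 * (conj (Mv x) * Lv x).re
        = vdiv d G x
          + (2 * α - ((d : ℝ) - 1)) * (k ^ 2 * ‖v x‖ ^ 2 - gradsq d v x)
          - (gradsq d v x - ‖rder d v x‖ ^ 2)
          - ‖rder d v x - Complex.I * (k : ℂ) * v x‖ ^ 2)
      (fun y => clap d v y + (k : ℂ) ^ 2 * v y)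
      (fun y => (∑ i, ((y i : ℝ) : ℂ) * cpd d v i y)
        - Complex.I * (k : ℂ) * ((‖y‖ : ℝ) : ℂ) * v y + (α : ℂ) * v y)
      (fun y => WithLp.toLp 2 (fun i =>
          2 * (conj ((∑ i', ((y i' : ℝ) : ℂ) * cpd d v i' y)
                - Complex.I * (k : ℂ) * ((‖y‖ : ℝ) : ℂ) * v y + (α : ℂ) * v y)
              * cpd d v i y).re
            + (k ^ 2 * ‖v y‖ ^ 2 - gradsq d v y) * y i : Fin d → ℝ)) := by
  have hx0 : x ≠ 0 := hD0 hx
  have hv2 : ContDiffAt ℝ 2 v x := hv.contDiffAt (hD.mem_nhds hx)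
  change 2 * (conj (morawetzMultiplier d k α v x) * (clap d v x + k ^ 2 * v x)).re
      = vdiv d (morawetzFlux d k α v) x + (2 * α - ((d : ℝ) - 1)) * helmholtzLagrangian d k v x
        - (gradsq d v x - ‖eulerDeriv d v x / ‖x‖‖ ^ 2)
        - ‖eulerDeriv d v x / ‖x‖ - Complex.I * k * v x‖ ^ 2
  rw [vdiv_morawetzFlux hv2 hx0]
  unfold helmholtzLagrangian morawetzMultiplier
  simp only [← Complex.ofReal_pow, Complex.sq_norm, Complex.normSq_apply, map_sub, map_add,
    map_mul, Complex.conj_ofReal, Complex.conj_I, Complex.mul_re, Complex.mul_im, Complex.add_re,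
    Complex.add_im, Complex.sub_re, Complex.sub_im, Complex.div_re, Complex.div_im,
    Complex.conj_re, Complex.conj_im, Complex.I_re, Complex.I_im, Complex.ofReal_re,
    Complex.ofReal_im, Complex.neg_re, Complex.neg_im]
  field_simp
  ring

/-- **Morawetz–Ludwig identity.**  Let `d ≥ 2`, `D ⊆ ℝ^d \ {0}` open, `k, α ∈ ℝ`, and let
`v : D → ℂ` be twice continuously differentiable.  With `r = |x|`, `v_r = x·∇v/r`,
`Lv = Δv + k²v` and `M_α v = x·∇v − i k r v + α v`, at every point of `D`:
`2 Re(conj(M_α v) Lv) = div[2 Re(conj(M_α v) ∇v) + (k²|v|² − |∇v|²)x]`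
`+ (2α − (d−1))(k²|v|² − |∇v|²) − (|∇v|² − |v_r|²) − |v_r − i k v|²`. -/
theorem morawetz_ludwig_identity (d : ℕ) (hd : 2 ≤ d)
    (D : Set (EuclideanSpace ℝ (Fin d))) (hD : IsOpen D)
    (hD0 : D ⊆ {x : EuclideanSpace ℝ (Fin d) | x ≠ 0}) (k α : ℝ)
    (v : EuclideanSpace ℝ (Fin d) → ℂ) (hv : ContDiffOn ℝ 2 v D)
    (x : EuclideanSpace ℝ (Fin d)) (hx : x ∈ D) :
    (fun (Lv Mv : EuclideanSpace ℝ (Fin d) → ℂ)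
         (G : EuclideanSpace ℝ (Fin d) → EuclideanSpace ℝ (Fin d)) =>
      2 * (conj (Mv x) * Lv x).re
        = vdiv d G x
          + (2 * α - ((d : ℝ) - 1)) * (k ^ 2 * ‖v x‖ ^ 2 - gradsq d v x)
          - (gradsq d v x - ‖rder d v x‖ ^ 2)
          - ‖rder d v x - Complex.I * (k : ℂ) * v x‖ ^ 2)
      (fun y => clap d v y + (k : ℂ) ^ 2 * v y)
      (fun y => (∑ i, ((y i : ℝ) : ℂ) * cpd d v i y)
        - Complex.I * (k : ℂ) * ((‖y‖ : ℝ) : ℂ) * v y + (α : ℂ) * v y)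
      (fun y => WithLp.toLp 2 (fun i =>
          2 * (conj ((∑ i', ((y i' : ℝ) : ℂ) * cpd d v i' y)
                - Complex.I * (k : ℂ) * ((‖y‖ : ℝ) : ℂ) * v y + (α : ℂ) * v y)
              * cpd d v i y).re
            + (k ^ 2 * ‖v y‖ ^ 2 - gradsq d v y) * y i : Fin d → ℝ)) :=
  morawetz_ludwig_identity_general d D hD hD0 k α v hv x hx
end
end

section
/- Let d ≥ 2, 0 < R0 < R1, let χ be an admissible transition function for (R0, R1), and let Z be the associated vector field Z(x) := x_d (1 − χ(|x|)) e_d + χ(|x|) x. Then for every x ≠ 0 and every ℂ-valued function u differentiable at x, with r := |x|, Σ_{i,j=1}^d (∂_i Z_j)(x) (∂_i u)(x) conj((∂_j u)(x)) = |∂_d u(x)|² (1 − χ(r)) + |∇u(x)|² χ(r) + ( r |∂_r u(x)|² − x_d ∂_r u(x) conj(∂_d u(x)) ) χ′(r). -/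
/-!
By the product rule and `∇|x| = x/|x|`, the Jacobian of `Z` at `x ≠ 0` is
`∂_i Z_j = χ δ_ij + (χ'/r) x_i x_j + δ_jd ((1 - χ) δ_id - x_d (χ'/r) x_i)`:
a multiple of the identity, a rank-one term, and a correction in the `d`-th column.
Against `∇u ⊗ conj ∇u` these give `χ|∇u|²`, `(χ'/r)|x·∇u|² = rχ'|∂_r u|²`,
`(1 - χ)|∂_d u|²` and `-x_d χ' ∂_r u conj(∂_d u)`.
-/

open scoped BigOperators ComplexConjugate

noncomputable section

/-- The vector field `Z(x) = x_d (1 − χ(|x|)) e_d + χ(|x|) x`. -/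
def Zfield (d : ℕ) (ld : Fin d) (χ : ℝ → ℝ) (x : EuclideanSpace ℝ (Fin d)) :
    EuclideanSpace ℝ (Fin d) :=
  (x ld * (1 - χ ‖x‖)) • EuclideanSpace.single ld 1 + χ ‖x‖ • x

theorem hasFDerivAt_norm_of_ne_zero {E : Type*} [NormedAddCommGroup E] [InnerProductSpace ℝ E]
    {x : E} (hx : x ≠ 0) : HasFDerivAt (‖·‖) (‖x‖⁻¹ • innerSL ℝ x) x := by
  have hsqrt := (Real.hasDerivAt_sqrt (pow_ne_zero 2 (norm_ne_zero_iff.2 hx))).comp_hasFDerivAt x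
    (hasStrictFDerivAt_norm_sq x).hasFDerivAt
  have hfun : (Real.sqrt ∘ fun y : E => ‖y‖ ^ 2) = (‖·‖) := by
    ext y; exact Real.sqrt_sq (norm_nonneg y)
  rw [hfun, Real.sqrt_sq (norm_nonneg x)] at hsqrt
  refine hsqrt.congr_fderiv ?_
  ext y
  simp only [one_div, mul_inv_rev, smul_apply, coe_innerSL_apply, nsmul_eq_mul, Nat.cast_ofNat,
    smul_eq_mul]
  field_simp

open InnerProductSpace in
theorem fderiv_Zfield_apply {d : ℕ} (ld : Fin d) {χ : ℝ → ℝ} {x : EuclideanSpace ℝ (Fin d)}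
    (hx : x ≠ 0) (hχ : DifferentiableAt ℝ χ ‖x‖) (v : EuclideanSpace ℝ (Fin d)) :
    fderiv ℝ (Zfield d ld χ) x v
      = (v ld * (1 - χ ‖x‖) - x ld * (deriv χ ‖x‖ / ‖x‖ * ⟪x, v⟫_ℝ)) • EuclideanSpace.single ld 1
        + (deriv χ ‖x‖ / ‖x‖ * ⟪x, v⟫_ℝ) • x + χ ‖x‖ • v := by
  have hχnorm := hχ.hasDerivAt.comp_hasFDerivAt x (hasFDerivAt_norm_of_ne_zero hx)
  have hcoord : HasFDerivAt (fun y : EuclideanSpace ℝ (Fin d) => y ld)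
      (EuclideanSpace.proj (𝕜 := ℝ) ld) x :=
    (EuclideanSpace.proj (𝕜 := ℝ) ld).hasFDerivAt
  have hZ : HasFDerivAt (Zfield d ld χ) _ x :=
    ((hcoord.mul ((hasFDerivAt_const 1 x).sub hχnorm)).smul_const
      (EuclideanSpace.single ld (1 : ℝ))).add (hχnorm.smul (hasFDerivAt_id x))
  rw [hZ.fderiv]
  simp only [zero_sub, smul_neg, Pi.sub_apply, Function.comp_apply, add_apply,
    ContinuousLinearMap.smulRight_apply, neg_apply,
    smul_apply, coe_innerSL_apply, smul_eq_mul, PiLp.proj_apply,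
    ContinuousLinearMap.id_apply]
  module

theorem sum_sum_mul_mul_conj_of_scalar_add_rankOne_add_col {ι : Type*} [Fintype ι]
    [DecidableEq ι] (k : ι) (a b e f : ℂ) (X U : ι → ℂ) :
    ∑ i, ∑ j, (a * (if j = i then 1 else 0) + b * X i * X j
        + (if j = k then e * (if i = k then 1 else 0) - f * X i else 0)) * U i * conj (U j)
      = a * ∑ i, U i * conj (U i) + b * ((∑ i, X i * U i) * ∑ j, X j * conj (U j))
        + e * U k * conj (U k) - f * (∑ i, X i * U i) * conj (U k) := by
  have hrankOne : b * ((∑ i, X i * U i) * ∑ j, X j * conj (U j))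
      = ∑ i, ∑ j, b * X i * X j * U i * conj (U j) := by
    rw [Finset.sum_mul_sum]; simp only [Finset.mul_sum]
    exact Finset.sum_congr rfl fun i _ => Finset.sum_congr rfl fun j _ => by ring
  rw [hrankOne]
  simp only [add_mul, sub_mul, ite_mul, zero_mul, mul_ite, mul_zero, mul_one,
    Finset.sum_add_distrib, Finset.sum_sub_distrib, Finset.sum_ite_eq',
    Finset.mem_univ, if_true, Finset.mul_sum, Finset.sum_mul]
  ring_nf

theorem Zfield_quadratic_form_of_differentiableAt {d : ℕ} (ld : Fin d) {χ : ℝ → ℝ}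
    {x : EuclideanSpace ℝ (Fin d)} (hx : x ≠ 0) (hχ : DifferentiableAt ℝ χ ‖x‖)
    (u : EuclideanSpace ℝ (Fin d) → ℂ) :
    ∑ i, ∑ j,
        ((fderiv ℝ (Zfield d ld χ) x (EuclideanSpace.single i 1) j : ℝ) : ℂ)
          * cpd d u i x * conj (cpd d u j x)
      = ((‖cpd d u ld x‖ ^ 2 : ℝ) : ℂ) * ((1 - χ ‖x‖ : ℝ) : ℂ)
        + ((gradsq d u x : ℝ) : ℂ) * ((χ ‖x‖ : ℝ) : ℂ)
        + (((‖x‖ : ℝ) : ℂ) * ((‖rder d u x‖ ^ 2 : ℝ) : ℂ)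
            - ((x ld : ℝ) : ℂ) * rder d u x * conj (cpd d u ld x))
          * ((deriv χ ‖x‖ : ℝ) : ℂ) := by
  have hentry : ∀ i j, ((fderiv ℝ (Zfield d ld χ) x (EuclideanSpace.single i 1) j : ℝ) : ℂ)
      = (χ ‖x‖ : ℂ) * (if j = i then 1 else 0) + (deriv χ ‖x‖ / ‖x‖ : ℂ) * x i * x j
        + (if j = ld then (1 - χ ‖x‖ : ℂ) * (if i = ld then 1 else 0)
            - (x ld * deriv χ ‖x‖ / ‖x‖ : ℂ) * x i else 0) := by
    intro i j
    rw [fderiv_Zfield_apply ld hx hχ]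
    simp only [PiLp.add_apply, PiLp.smul_apply, smul_eq_mul, PiLp.single_apply,
      EuclideanSpace.inner_single_right, conj_trivial, one_mul]
    split_ifs <;> subst_vars <;> first | contradiction | (push_cast; ring)
  have hnormSq : ∀ z : ℂ, ((‖z‖ ^ 2 : ℝ) : ℂ) = z * conj z := fun z => by
    rw [Complex.mul_conj', Complex.ofReal_pow]
  have hgradsq : ((gradsq d u x : ℝ) : ℂ) = ∑ i, cpd d u i x * conj (cpd d u i x) := by
    simp only [gradsq, Complex.ofReal_sum, hnormSq]
  have hconjSum : conj (∑ i, (x i : ℂ) * cpd d u i x) = ∑ j, (x j : ℂ) * conj (cpd d u j x) := by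
    simp only [map_sum, map_mul, Complex.conj_ofReal]
  simp only [hentry]
  rw [sum_sum_mul_mul_conj_of_scalar_add_rankOne_add_col, hnormSq, hnormSq, hgradsq, rder,
    map_div₀, Complex.conj_ofReal, hconjSum]
  field_simp
  push_cast
  ring

/-- For the vector field `Z(x) = x_d(1 − χ(|x|))e_d + χ(|x|)x` associated with an
admissible transition function `χ` for `(R0, R1)`, for every `x ≠ 0` and every
`ℂ`-valued `u` differentiable at `x`, with `r = |x|`:
`Σ_{i,j} ∂_i Z_j ∂_i u conj(∂_j u)`
`= |∂_d u|²(1 − χ(r)) + |∇u|²χ(r) + (r|∂_r u|² − x_d ∂_r u conj(∂_d u))χ′(r)`. -/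
theorem Zfield_quadratic_form (d : ℕ) (hd : 2 ≤ d) (R0 R1 : ℝ)
    (χ : ℝ → ℝ) (hχ : IsAdmissibleTransition R0 R1 χ)
    (x : EuclideanSpace ℝ (Fin d)) (hx : x ≠ 0)
    (u : EuclideanSpace ℝ (Fin d) → ℂ) :
    ∑ i, ∑ j,
        ((fderiv ℝ (Zfield d ⟨d - 1, by omega⟩ χ) x (EuclideanSpace.single i 1) j : ℝ) : ℂ)
          * cpd d u i x * conj (cpd d u j x)
      = ((‖cpd d u ⟨d - 1, by omega⟩ x‖ ^ 2 : ℝ) : ℂ) * ((1 - χ ‖x‖ : ℝ) : ℂ)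
        + ((gradsq d u x : ℝ) : ℂ) * ((χ ‖x‖ : ℝ) : ℂ)
        + (((‖x‖ : ℝ) : ℂ) * ((‖rder d u x‖ ^ 2 : ℝ) : ℂ)
            - ((x ⟨d - 1, by omega⟩ : ℝ) : ℂ) * rder d u x
              * conj (cpd d u ⟨d - 1, by omega⟩ x))
          * ((deriv χ ‖x‖ : ℝ) : ℂ) := by
  have hχx : DifferentiableAt ℝ χ ‖x‖ :=
    (hχ.contDiffOn.contDiffAt (Ici_mem_nhds (norm_pos_iff.2 hx))).differentiableAt (by norm_num)
  exact Zfield_quadratic_form_of_differentiableAt _ hx hχx u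
end
end

section
/- There exists a constant C > 0 such that for every k ≥ 1, ∫₀^∞ (1+r)^{−2} |k² − r²|^{−1/2} dr ≤ C/k; in particular, the improper integral on the left-hand side is finite for every k ≥ 1 (the integrand has an integrable singularity at r = k). -/
/-!
Write `|k² − r²| = |r − k| (r + k)`. Away from the singularity, where `|r − k| ≥ k/2`, this is
at least `(k/2)²`, so the integrand is at most `(2/k)(1 + r)⁻²`, whose integral over `(0, ∞)` is
`2/k`. On `(k/2, 3k/2]` instead `(1 + r)⁻² ≤ 4/k²` and `(r + k)^{-1/2} ≤ k^{-1/2}`, and the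
remaining factor `|r − k|^{-1/2}` has integral `4 √(k/2)` there, so this part contributes at most
`16/k² ≤ 16/k`.
-/

open MeasureTheory Set Real Filter Topology

section PowerSingularity

variable {s c δ : ℝ}

lemma abs_sub_rpow_eqOn_Ici : EqOn (fun x => |x - c| ^ s) (fun x => (x - c) ^ s) (Ici c) :=
  fun x hx => by simp only [abs_of_nonneg (sub_nonneg.2 (mem_Ici.1 hx))]

lemma intervalIntegrable_abs_sub_rpow_right (hs : -1 < s) (hδ : 0 ≤ δ) :
    IntervalIntegrable (fun x => |x - c| ^ s) volume c (c + δ) := by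
  have := (intervalIntegral.intervalIntegrable_rpow' hs (a := 0) (b := δ)).comp_sub_right c
  rw [zero_add, add_comm δ] at this
  refine this.congr fun x hx => (abs_sub_rpow_eqOn_Ici ?_).symm
  rw [uIoc_of_le (by linarith)] at hx
  exact hx.1.le

lemma intervalIntegrable_abs_sub_rpow_left (hs : -1 < s) (hδ : 0 ≤ δ) :
    IntervalIntegrable (fun x => |x - c| ^ s) volume (c - δ) c := by
  have := ((intervalIntegrable_abs_sub_rpow_right (c := c) hs hδ).comp_sub_left (2 * c)).symm
  rw [show 2 * c - c = c by ring, show 2 * c - (c + δ) = c - δ by ring] at this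
  refine this.congr fun x _ => ?_
  simp only [abs_sub_comm x c]
  ring_nf

lemma integral_abs_sub_rpow_right (hs : -1 < s) (hδ : 0 ≤ δ) :
    ∫ x in c..c + δ, |x - c| ^ s = δ ^ (s + 1) / (s + 1) := by
  rw [intervalIntegral.integral_congr (g := fun x => (x - c) ^ s),
    intervalIntegral.integral_comp_sub_right (fun x => x ^ s),
    sub_self, add_sub_cancel_left, integral_rpow (.inl hs), zero_rpow (by linarith), sub_zero]
  intro x hx
  rw [uIcc_of_le (by linarith)] at hx
  exact abs_sub_rpow_eqOn_Ici hx.1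

lemma integral_abs_sub_rpow_left (hs : -1 < s) (hδ : 0 ≤ δ) :
    ∫ x in c - δ..c, |x - c| ^ s = δ ^ (s + 1) / (s + 1) := by
  calc ∫ x in c - δ..c, |x - c| ^ s = ∫ x in c - δ..c, |(2 * c - x) - c| ^ s := by
        congr 1; ext x; rw [abs_sub_comm]; ring_nf
    _ = δ ^ (s + 1) / (s + 1) := by
        rw [intervalIntegral.integral_comp_sub_left (fun x => |x - c| ^ s),
          show 2 * c - c = c by ring, show 2 * c - (c - δ) = c + δ by ring,
          integral_abs_sub_rpow_right hs hδ]

lemma intervalIntegrable_abs_sub_rpow (hs : -1 < s) (hδ : 0 ≤ δ) :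
    IntervalIntegrable (fun x => |x - c| ^ s) volume (c - δ) (c + δ) :=
  (intervalIntegrable_abs_sub_rpow_left hs hδ).trans (intervalIntegrable_abs_sub_rpow_right hs hδ)

lemma integral_abs_sub_rpow (hs : -1 < s) (hδ : 0 ≤ δ) :
    ∫ x in c - δ..c + δ, |x - c| ^ s = 2 * δ ^ (s + 1) / (s + 1) := by
  rw [← intervalIntegral.integral_add_adjacent_intervals (intervalIntegrable_abs_sub_rpow_left hs hδ)
    (intervalIntegrable_abs_sub_rpow_right hs hδ), integral_abs_sub_rpow_left hs hδ,
    integral_abs_sub_rpow_right hs hδ]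
  ring

end PowerSingularity

section InverseSquare

variable {c : ℝ}

lemma hasDerivAt_neg_inv_add (x : ℝ) (hx : c + x ≠ 0) :
    HasDerivAt (fun x => -(c + x)⁻¹) ((c + x) ^ 2)⁻¹ x :=
  (((hasDerivAt_id x).const_add c).inv hx).neg.congr_deriv (by simp [neg_div])

lemma tendsto_neg_inv_add_atTop : Tendsto (fun x : ℝ => -(c + x)⁻¹) atTop (𝓝 0) := by
  simpa using (tendsto_atTop_add_const_left _ c tendsto_id).inv_tendsto_atTop.neg

lemma integrableOn_Ioi_inv_add_sq (hc : 0 < c) : IntegrableOn (fun x => ((c + x) ^ 2)⁻¹) (Ioi 0) :=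
  integrableOn_Ioi_deriv_of_nonneg'
    (fun x (hx : 0 ≤ x) => hasDerivAt_neg_inv_add x (by positivity))
    (fun x _ => by positivity) tendsto_neg_inv_add_atTop

lemma integral_Ioi_inv_add_sq (hc : 0 < c) : ∫ x in Ioi 0, ((c + x) ^ 2)⁻¹ = c⁻¹ := by
  simpa using integral_Ioi_of_hasDerivAt_of_nonneg'
    (fun x (hx : 0 ≤ x) => hasDerivAt_neg_inv_add x (by positivity))
    (fun x _ => by positivity) tendsto_neg_inv_add_atTop

end InverseSquare

lemma integrableOn_and_setIntegral_le_of_le {α : Type*} [MeasurableSpace α] {μ : Measure α}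
    {f g : α → ℝ} {s : Set α} (hs : MeasurableSet s) (hf : AEStronglyMeasurable f (μ.restrict s))
    (hg : IntegrableOn g s μ) (hf0 : ∀ x ∈ s, 0 ≤ f x) (hfg : ∀ x ∈ s, f x ≤ g x) :
    IntegrableOn f s μ ∧ ∫ x in s, f x ∂μ ≤ ∫ x in s, g x ∂μ := by
  have hfi : IntegrableOn f s μ := hg.mono' hf <| (ae_restrict_iff' hs).2 <| ae_of_all _
    fun x hx => (Real.norm_of_nonneg (hf0 x hx)).trans_le (hfg x hx)
  exact ⟨hfi, setIntegral_mono_on hfi hg hs hfg⟩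

noncomputable def weightedInvSqrt (k r : ℝ) : ℝ := ((1 + r) ^ 2)⁻¹ * (√|k ^ 2 - r ^ 2|)⁻¹

section WeightedInvSqrt

variable {k r : ℝ}

lemma abs_sq_sub_sq_of_nonneg (hk : 0 ≤ k) (hr : 0 ≤ r) : |k ^ 2 - r ^ 2| = |r - k| * (r + k) := by
  rw [show k ^ 2 - r ^ 2 = (k - r) * (r + k) by ring, abs_mul, abs_sub_comm,
    abs_of_nonneg (by linarith : 0 ≤ r + k)]

lemma inv_sqrt_abs_sq_sub_sq_le (hk : 0 < k) (hr : 0 ≤ r) :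
    (√|k ^ 2 - r ^ 2|)⁻¹ ≤ (√k)⁻¹ * |r - k| ^ (-(1 / 2) : ℝ) := by
  rw [abs_sq_sub_sq_of_nonneg hk.le hr, sqrt_mul (abs_nonneg _), mul_inv, mul_comm,
    rpow_neg (abs_nonneg _), ← sqrt_eq_rpow]
  gcongr
  linarith

lemma inv_sqrt_abs_sq_sub_sq_le_inv {δ : ℝ} (hδ : 0 < δ) (hδk : δ ≤ k) (hr : 0 ≤ r)
    (hδr : δ ≤ |r - k|) : (√|k ^ 2 - r ^ 2|)⁻¹ ≤ δ⁻¹ := by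
  refine inv_anti₀ hδ ((le_sqrt' hδ).2 ?_)
  rw [abs_sq_sub_sq_of_nonneg (by linarith) hr, sq]
  exact mul_le_mul hδr (by linarith) hδ.le (abs_nonneg _)

lemma measurable_weightedInvSqrt : Measurable (weightedInvSqrt k) := by
  unfold weightedInvSqrt; fun_prop

lemma weightedInvSqrt_nonneg : 0 ≤ weightedInvSqrt k r := by
  unfold weightedInvSqrt; positivity

lemma integrableOn_weightedInvSqrt_Ioc_and_setIntegral_le (hk : 0 < k) :
    IntegrableOn (weightedInvSqrt k) (Ioc (k - k / 2) (k + k / 2)) ∧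
      ∫ r in Ioc (k - k / 2) (k + k / 2), weightedInvSqrt k r ≤ 16 / k ^ 2 := by
  have hs : -1 < (-(1 / 2) : ℝ) := by norm_num
  have hδ : 0 ≤ k / 2 := by positivity
  have hle : k - k / 2 ≤ k + k / 2 := by linarith
  set A := ((k / 2) ^ 2)⁻¹ * (√k)⁻¹
  have hg : IntegrableOn (fun r => A * |r - k| ^ (-(1 / 2) : ℝ)) (Ioc (k - k / 2) (k + k / 2)) :=
    ((intervalIntegrable_iff_integrableOn_Ioc_of_le hle).1
      (intervalIntegrable_abs_sub_rpow hs hδ)).const_mul A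
  obtain ⟨hfi, hfg⟩ := integrableOn_and_setIntegral_le_of_le measurableSet_Ioc
    measurable_weightedInvSqrt.aestronglyMeasurable hg (fun r _ => weightedInvSqrt_nonneg)
    fun r hr => by
      have hr0 : k / 2 < r := by linarith [hr.1]
      rw [mul_assoc]
      refine mul_le_mul ?_ (inv_sqrt_abs_sq_sub_sq_le hk (by linarith)) (by positivity)
        (by positivity)
      exact inv_anti₀ (by positivity) (by gcongr; linarith)
  refine ⟨hfi, ?_⟩
  calc ∫ r in Ioc (k - k / 2) (k + k / 2), weightedInvSqrt k r
      ≤ ∫ r in Ioc (k - k / 2) (k + k / 2), A * |r - k| ^ (-(1 / 2) : ℝ) := hfg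
    _ = A * (2 * (k / 2) ^ (-(1 / 2) + 1 : ℝ) / (-(1 / 2) + 1)) := by
      rw [integral_const_mul, ← intervalIntegral.integral_of_le hle, integral_abs_sub_rpow hs hδ]
    _ = 16 / k ^ 2 * (√(k / 2) / √k) := by
      rw [show (-(1 / 2) : ℝ) + 1 = 1 / 2 by norm_num, ← sqrt_eq_rpow]
      simp only [A]
      field_simp
      ring
    _ ≤ 16 / k ^ 2 := by
      refine mul_le_of_le_one_right (by positivity) ?_
      exact div_le_one_of_le₀ (sqrt_le_sqrt (by linarith)) (sqrt_nonneg _)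

lemma integrableOn_weightedInvSqrt_Ioi_diff_Ioc_and_setIntegral_le (hk : 0 < k) :
    IntegrableOn (weightedInvSqrt k) (Ioi 0 \ Ioc (k - k / 2) (k + k / 2)) ∧
      ∫ r in Ioi 0 \ Ioc (k - k / 2) (k + k / 2), weightedInvSqrt k r ≤ 2 / k := by
  have hg : IntegrableOn (fun r => ((1 + r) ^ 2)⁻¹ * (k / 2)⁻¹) (Ioi 0) :=
    (integrableOn_Ioi_inv_add_sq one_pos).mul_const _
  obtain ⟨hfi, hfg⟩ := integrableOn_and_setIntegral_le_of_le
    (s := Ioi 0 \ Ioc (k - k / 2) (k + k / 2)) (measurableSet_Ioi.diff measurableSet_Ioc)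
    measurable_weightedInvSqrt.aestronglyMeasurable (hg.mono_set sdiff_subset)
    (fun r _ => weightedInvSqrt_nonneg) fun r ⟨hr0, hr⟩ => by
      have hδr : k / 2 ≤ |r - k| := by
        rw [mem_Ioc, not_and_or, not_lt, not_le] at hr
        rcases hr with hr | hr
        · rw [abs_sub_comm, abs_of_nonneg (by linarith)]; linarith
        · rw [abs_of_nonneg (by linarith)]; linarith
      exact mul_le_mul_of_nonneg_left
        (inv_sqrt_abs_sq_sub_sq_le_inv (by positivity) (by linarith) (le_of_lt hr0) hδr)
        (by positivity)
  refine ⟨hfi, ?_⟩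
  calc ∫ r in Ioi 0 \ Ioc (k - k / 2) (k + k / 2), weightedInvSqrt k r
      ≤ ∫ r in Ioi 0 \ Ioc (k - k / 2) (k + k / 2), ((1 + r) ^ 2)⁻¹ * (k / 2)⁻¹ := hfg
    _ ≤ ∫ r in Ioi 0, ((1 + r) ^ 2)⁻¹ * (k / 2)⁻¹ :=
      setIntegral_mono_set hg (ae_of_all _ fun r => by positivity) sdiff_subset.eventuallyLE
    _ = 2 / k := by rw [integral_mul_const, integral_Ioi_inv_add_sq one_pos]; field_simp

end WeightedInvSqrt

/-- There exists `C > 0` such that for every `k ≥ 1` the function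
`r ↦ (1+r)^{−2}|k² − r²|^{−1/2}` is integrable on `(0, ∞)` and
`∫₀^∞ (1+r)^{−2}|k² − r²|^{−1/2} dr ≤ C/k`. -/
theorem integral_estimate_exists_const :
    ∃ C : ℝ, 0 < C ∧ ∀ k : ℝ, 1 ≤ k →
      IntegrableOn (fun r : ℝ => ((1 + r) ^ 2)⁻¹ * (Real.sqrt |k ^ 2 - r ^ 2|)⁻¹)
        (Set.Ioi (0 : ℝ)) volume ∧
      ∫ r in Set.Ioi (0 : ℝ), ((1 + r) ^ 2)⁻¹ * (Real.sqrt |k ^ 2 - r ^ 2|)⁻¹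
        ≤ C / k := by
  refine ⟨18, by norm_num, fun k hk => ?_⟩
  have hk0 : 0 < k := by linarith
  obtain ⟨hnear_int, hnear⟩ := integrableOn_weightedInvSqrt_Ioc_and_setIntegral_le hk0
  obtain ⟨hfar_int, hfar⟩ := integrableOn_weightedInvSqrt_Ioi_diff_Ioc_and_setIntegral_le hk0
  have hsub : Ioi 0 ∩ Ioc (k - k / 2) (k + k / 2) = Ioc (k - k / 2) (k + k / 2) :=
    inter_eq_right.2 fun r hr => show 0 < r by linarith [hr.1]
  have hint : IntegrableOn (weightedInvSqrt k) (Ioi 0) := by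
    rw [← inter_union_sdiff (Ioi 0) (Ioc (k - k / 2) (k + k / 2)), hsub]
    exact hnear_int.union hfar_int
  refine ⟨hint, ?_⟩
  change ∫ r in Ioi 0, weightedInvSqrt k r ≤ 18 / k
  rw [← integral_inter_add_sdiff measurableSet_Ioc hint, hsub]
  have hk_sq : 16 / k ^ 2 ≤ 16 / k := div_le_div_of_nonneg_left (by norm_num) hk0 (by nlinarith)
  linarith [show 18 / k = 16 / k + 2 / k by ring]
end
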